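/- arXiv:2302.12473 — 7 statements merged into one kernel-verified Lean document; each statement's English description precedes it below -/
import Mathlib

section
/- Uniqueness of normal forms with respect to a subalgebra: let A be a subalgebra of MvPolynomial σ k, and let r, r' be polynomials such that r − r' ∈ A and such that for every exponent vector d in the support of r and every exponent vector d in the support of r', the monomial x^d (with coefficient 1) does not lie in the initial algebra in_m(A). Then r = r'. -/
open MvPolynomial

noncomputable section

variable {σ : Type*} [Fintype σ] {k : Type*} [Field k]

/-- The degree (largest exponent vector) of a polynomial with respect to a monomial order. -/
def MonomialOrder.degree' (m : MonomialOrder σ) (f : MvPolynomial σ k) : σ →₀ ℕ :=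
  m.toSyn.symm (f.support.sup fun d => m.toSyn d)

/-- The leading term of a polynomial with respect to a monomial order. -/
def MonomialOrder.leadTerm (m : MonomialOrder σ) (f : MvPolynomial σ k) : MvPolynomial σ k :=
  monomial (m.degree' f) (f.coeff (m.degree' f))

/-- The initial algebra of a subalgebra `A`: the `k`-subalgebra generated by the leading
terms of the nonzero elements of `A`. -/
def MonomialOrder.initialAlgebra (m : MonomialOrder σ) (A : Subalgebra k (MvPolynomial σ k)) :
    Subalgebra k (MvPolynomial σ k) :=
  Algebra.adjoin k {p | ∃ a ∈ A, a ≠ 0 ∧ p = m.leadTerm a}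

/-- Uniqueness of normal forms with respect to a subalgebra. -/
theorem normalForm_unique (m : MonomialOrder σ) (A : Subalgebra k (MvPolynomial σ k))
    (r r' : MvPolynomial σ k) (h : r - r' ∈ A)
    (hr : ∀ d ∈ r.support, (monomial d (1 : k)) ∉ m.initialAlgebra A)
    (hr' : ∀ d ∈ r'.support, (monomial d (1 : k)) ∉ m.initialAlgebra A) :
    r = r' := by
  by_contra hne
  set f := r - r' with hf
  have hf0 : f ≠ 0 := sub_ne_zero_of_ne hne
  -- degree of f is in its support
  have hsupp : f.support.Nonempty := MvPolynomial.support_nonempty.mpr hf0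
  obtain ⟨d, hd, hde⟩ := Finset.exists_mem_eq_sup f.support hsupp (fun d => m.toSyn d)
  have hdeg : m.degree' f = d := by
    rw [MonomialOrder.degree', hde]; exact m.toSyn.symm_apply_apply d
  have hc : f.coeff d ≠ 0 := MvPolynomial.mem_support_iff.mp hd
  -- leadTerm f ∈ initialAlgebra
  have hlead : m.leadTerm f ∈ m.initialAlgebra A :=
    Algebra.subset_adjoin ⟨f, h, hf0, rfl⟩
  have hmon : (monomial d (1 : k)) ∈ m.initialAlgebra A := by
    have : (monomial d (1 : k)) = (f.coeff d)⁻¹ • m.leadTerm f := by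
      rw [MonomialOrder.leadTerm, hdeg, MvPolynomial.smul_monomial,
        smul_eq_mul, inv_mul_cancel₀ hc]
    rw [this]
    exact Subalgebra.smul_mem _ hlead _
  -- d is in support of r or r'
  have : d ∈ r.support ∪ r'.support := by
    by_contra hduni
    simp only [Finset.mem_union, MvPolynomial.mem_support_iff, not_or, not_not] at hduni
    apply hc
    rw [hf, MvPolynomial.coeff_sub, hduni.1, hduni.2, sub_zero]
  rcases Finset.mem_union.mp this with h1 | h2
  · exact hr d h1 hmon
  · exact hr' d h2 hmon
end
end

section
/- Normal forms detect algebra membership: let A be a subalgebra of MvPolynomial σ k, let f be a polynomial, and let r be a polynomial such that f − r ∈ A and such that for every exponent vector d in the support of r, the monomial x^d does not lie in the initial algebra in_m(A). Then f ∈ A if and only if r = 0. -/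
open MvPolynomial

noncomputable section

variable {σ : Type*} [Fintype σ] {k : Type*} [Field k]

section InitialAlgebra

omit [Fintype σ]

namespace MonomialOrder

variable (m : MonomialOrder σ)

theorem degree'_mem_support {f : MvPolynomial σ k} (hf : f ≠ 0) : m.degree' f ∈ f.support := by
  obtain ⟨d, hd, hsup⟩ :=
    Finset.exists_mem_eq_sup f.support (support_nonempty.mpr hf) fun d => m.toSyn d
  simpa [degree', hsup] using hd

theorem leadTerm_mem_initialAlgebra {A : Subalgebra k (MvPolynomial σ k)}
    {a : MvPolynomial σ k} (ha : a ∈ A) (ha0 : a ≠ 0) : m.leadTerm a ∈ m.initialAlgebra A :=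
  Algebra.subset_adjoin ⟨a, ha, ha0, rfl⟩

theorem monomial_degree'_mem_initialAlgebra {A : Subalgebra k (MvPolynomial σ k)}
    {a : MvPolynomial σ k} (ha : a ∈ A) (ha0 : a ≠ 0) :
    monomial (m.degree' a) (1 : k) ∈ m.initialAlgebra A := by
  have hcoeff : a.coeff (m.degree' a) ≠ 0 := mem_support_iff.mp (m.degree'_mem_support ha0)
  have := (m.initialAlgebra A).smul_mem (m.leadTerm_mem_initialAlgebra ha ha0)
    (a.coeff (m.degree' a))⁻¹
  rwa [leadTerm, smul_monomial, smul_eq_mul, inv_mul_cancel₀ hcoeff] at this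

end MonomialOrder

end InitialAlgebra

/-- Normal forms detect algebra membership. -/
theorem mem_iff_normalForm_eq_zero (m : MonomialOrder σ) (A : Subalgebra k (MvPolynomial σ k))
    (f r : MvPolynomial σ k) (h : f - r ∈ A)
    (hr : ∀ d ∈ r.support, (monomial d (1 : k)) ∉ m.initialAlgebra A) :
    f ∈ A ↔ r = 0 := by
  constructor
  · intro hf
    by_contra hr0
    have hrA : r ∈ A := by simpa using A.sub_mem hf h
    exact hr _ (m.degree'_mem_support hr0) (m.monomial_degree'_mem_initialAlgebra hrA hr0)
  · rintro rfl
    simpa using h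
end
end

section
/- A subalgebra basis generates the algebra: let A be a subalgebra of MvPolynomial σ k and let G be a subset of A. If for every nonzero a ∈ A the leading term in_m(a) lies in the k-subalgebra generated by { in_m(g) : g ∈ G, g ≠ 0 }, then Algebra.adjoin k G = A. -/
/-!
Over a domain, the leading exponents of the nonzero elements of a subalgebra `B` form an
additive monoid `D`, so the polynomials supported on `D` form a subalgebra; it contains every
leading term of `B`. Taking `B = k[G]`, the hypothesis puts the leading term of each nonzero
`a ∈ A` into that subalgebra, so `deg a = deg b` for some nonzero `b ∈ k[G]`. Subtracting the
scalar multiple of `b` with the same leading term lowers the degree while staying in `A`, and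
well-founded induction on the monomial order gives `a ∈ k[G]`.
-/

open MvPolynomial

namespace MvPolynomial

variable {σ : Type*} (R : Type*) [CommSemiring R]

noncomputable def restrictSupportSubalgebra (D : AddSubmonoid (σ →₀ ℕ)) :
    Subalgebra R (MvPolynomial σ R) :=
  (restrictSupport R (D : Set (σ →₀ ℕ))).toSubalgebra
    (by rw [← C_1, C_apply, monomial_mem_restrictSupport]; exact Or.inl D.zero_mem)
    fun _ _ hx hy => by
      rw [← AddSubmonoid.coe_add_self_eq D, restrictSupport_add]
      exact Submodule.mul_mem_mul hx hy

variable {R}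

theorem mem_restrictSupportSubalgebra {D : AddSubmonoid (σ →₀ ℕ)} {p : MvPolynomial σ R} :
    p ∈ restrictSupportSubalgebra R D ↔ p ∈ restrictSupport R (D : Set (σ →₀ ℕ)) :=
  Submodule.mem_toSubalgebra

end MvPolynomial

namespace MonomialOrder

variable {σ : Type*} (m : MonomialOrder σ)

section CommRing

variable {R : Type*} [CommRing R]

theorem degree_sub_lt_of_leadingTerm_eq {f g : MvPolynomial σ R}
    (h : m.leadingTerm f = m.leadingTerm g) (hfg : f ≠ g) :
    m.degree (f - g) ≺[m] m.degree f := by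
  obtain ⟨hc, hd⟩ := m.leadingTerm_eq_leadingTerm_iff.mp h
  refine lt_of_le_of_ne (by simpa [hd] using m.degree_sub_le (f := f) (g := g)) fun heq => ?_
  have := m.coeff_degree_ne_zero_iff.mpr (sub_ne_zero.mpr hfg)
  rw [m.toSyn.injective heq, coeff_sub, hd] at this
  simp only [leadingCoeff, hd] at hc
  exact this (sub_eq_zero.mpr hc)

theorem leadingTerm_mem_restrictSupport_iff {f : MvPolynomial σ R} (hf : f ≠ 0)
    {D : Set (σ →₀ ℕ)} : m.leadingTerm f ∈ restrictSupport R D ↔ m.degree f ∈ D := by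
  simp [leadingTerm, m.leadingCoeff_ne_zero_iff.mpr hf]

variable [IsDomain R]

noncomputable def degreeSubmonoid (B : Subalgebra R (MvPolynomial σ R)) :
    AddSubmonoid (σ →₀ ℕ) where
  carrier := {d | ∃ f ∈ B, f ≠ 0 ∧ m.degree f = d}
  zero_mem' := ⟨1, B.one_mem, one_ne_zero, m.degree_one⟩
  add_mem' := by
    rintro _ _ ⟨f, hf, hf0, rfl⟩ ⟨g, hg, hg0, rfl⟩
    exact ⟨f * g, B.mul_mem hf hg, mul_ne_zero hf0 hg0, m.degree_mul hf0 hg0⟩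

theorem adjoin_leadingTerm_le (B : Subalgebra R (MvPolynomial σ R)) :
    Algebra.adjoin R (m.leadingTerm '' B) ≤
      restrictSupportSubalgebra R (m.degreeSubmonoid B) := by
  refine Algebra.adjoin_le ?_
  rintro _ ⟨f, hf, rfl⟩
  rw [SetLike.mem_coe, mem_restrictSupportSubalgebra]
  obtain rfl | hf0 := eq_or_ne f 0
  · rw [leadingTerm_zero]; exact zero_mem _
  · exact (m.leadingTerm_mem_restrictSupport_iff hf0).mpr ⟨f, hf, hf0, rfl⟩

end CommRing

variable {k : Type*} [Field k]

theorem leadTerm_eq_leadingTerm (f : MvPolynomial σ k) : m.leadTerm f = m.leadingTerm f :=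
  rfl

theorem leadingTerm_leadingCoeff_div_smul {f g : MvPolynomial σ k} (hg : g ≠ 0)
    (h : m.degree g = m.degree f) :
    m.leadingTerm ((m.leadingCoeff f / m.leadingCoeff g) • g) = m.leadingTerm f := by
  obtain rfl | hf := eq_or_ne f 0
  · simp
  have hc : m.leadingCoeff f / m.leadingCoeff g ≠ 0 :=
    div_ne_zero (m.leadingCoeff_ne_zero_iff.mpr hf) (m.leadingCoeff_ne_zero_iff.mpr hg)
  have hdeg := m.degree_smul_of_isRegular (IsRegular.of_ne_zero hc) (f := g)
  rw [leadingTerm_eq_leadingTerm_iff, hdeg, leadingCoeff, hdeg, coeff_smul, ← leadingCoeff,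
    smul_eq_mul, div_mul_cancel₀ _ (m.leadingCoeff_ne_zero_iff.mpr hg)]
  exact ⟨rfl, h⟩

theorem le_of_forall_exists_degree_eq {A B : Submodule k (MvPolynomial σ k)} (hBA : B ≤ A)
    (h : ∀ a ∈ A, a ≠ 0 → ∃ b ∈ B, b ≠ 0 ∧ m.degree b = m.degree a) : A ≤ B := by
  suffices ∀ d : m.syn, ∀ a ∈ A, m.toSyn (m.degree a) = d → a ∈ B from
    fun a ha => this _ a ha rfl
  intro d
  induction d using WellFoundedLT.induction with
  | ind d ih =>
  intro a ha hd
  obtain rfl | ha0 := eq_or_ne a 0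
  · exact B.zero_mem
  obtain ⟨b, hb, hb0, hdeg⟩ := h a ha ha0
  set b' := (m.leadingCoeff a / m.leadingCoeff b) • b
  have hb' : b' ∈ B := B.smul_mem _ hb
  by_cases hab : a = b'
  · exact hab ▸ hb'
  have hlt : m.degree (a - b') ≺[m] m.degree a := m.degree_sub_lt_of_leadingTerm_eq
    (m.leadingTerm_leadingCoeff_div_smul hb0 hdeg).symm hab
  rw [← sub_add_cancel a b']
  exact B.add_mem (ih _ (hd ▸ hlt) _ (A.sub_mem ha (hBA hb')) rfl) hb'

end MonomialOrder

variable {σ : Type*} [Fintype σ] {k : Type*} [Field k]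

/-- A subalgebra basis generates the algebra. -/
theorem adjoin_eq_of_subalgebraBasis (m : MonomialOrder σ) (A : Subalgebra k (MvPolynomial σ k))
    (G : Set (MvPolynomial σ k)) (hG : G ⊆ (A : Set (MvPolynomial σ k)))
    (h : ∀ a ∈ A, a ≠ 0 →
      m.leadTerm a ∈ Algebra.adjoin k {p | ∃ g ∈ G, g ≠ 0 ∧ p = m.leadTerm g}) :
    Algebra.adjoin k G = A := by
  have hGA : Algebra.adjoin k G ≤ A := Algebra.adjoin_le hG
  have hS : {p | ∃ g ∈ G, g ≠ 0 ∧ p = m.leadTerm g} ⊆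
      m.leadingTerm '' Algebra.adjoin k G := by
    rintro _ ⟨g, hg, -, rfl⟩
    exact ⟨g, Algebra.subset_adjoin hg, rfl⟩
  refine le_antisymm hGA <| m.le_of_forall_exists_degree_eq (A := Subalgebra.toSubmodule A)
    (B := Subalgebra.toSubmodule (Algebra.adjoin k G)) hGA fun a ha ha0 => ?_
  have hdeg := m.adjoin_leadingTerm_le _ (Algebra.adjoin_mono hS (h a ha ha0))
  rw [m.leadTerm_eq_leadingTerm, mem_restrictSupportSubalgebra,
    m.leadingTerm_mem_restrictSupport_iff ha0] at hdeg
  exact hdeg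
end

section
/- Subduction representation: let g : Fin s → MvPolynomial σ k be a family of nonzero polynomials that is a subalgebra basis for A = Algebra.adjoin k (Set.range g), i.e. for every nonzero a ∈ A the leading term in_m(a) lies in the k-subalgebra generated by { in_m(g i) }. Then for every nonzero polynomial f ∈ MvPolynomial σ k there exist q ∈ MvPolynomial (Fin s) k and r ∈ MvPolynomial σ k such that f = (aeval g) q + r, for every exponent vector d in the support of r the monomial x^d does not lie in in_m(A), and for every exponent vector γ in the support of q one has m.degree(∏ i, (g i)^(γ i)) ≤ m.degree f in the order m. -/
/-!
Induct on `m.degree f` along the well-order `m`. If `x ^ (m.degree f)` lies in `in_m(A)`, then,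
because `in_m(A)` is generated by the monomials `in_m(g i)` and a monomial in an algebra generated
by monomials has its exponent in the monoid generated by theirs, `m.degree f = ∑ γ i • m.degree (g i)`;
a scalar multiple of `∏ g i ^ γ i` then has the same leading term as `f`. Otherwise the leading term
of `f` itself goes into the remainder. In both cases what is left has smaller degree, and
representations of a sum are obtained by adding representations of the summands.
-/

open MvPolynomial

noncomputable section

variable {σ : Type*} [Fintype σ] {k : Type*} [Field k]

theorem MvPolynomial.support_subset_closure_of_mem_adjoin {τ R : Type*} [CommSemiring R]
    {S : Set (MvPolynomial τ R)} {p : MvPolynomial τ R} (hp : p ∈ Algebra.adjoin R S) :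
    (p.support : Set (τ →₀ ℕ)) ⊆ AddSubmonoid.closure (⋃ q ∈ S, (q.support : Set (τ →₀ ℕ))) := by
  classical
  induction hp using Algebra.adjoin_induction with
  | mem q hq => exact fun d hd => AddSubmonoid.subset_closure (Set.mem_biUnion hq hd)
  | algebraMap r =>
    intro d hd
    rw [Finset.mem_singleton.mp (support_monomial_subset hd)]
    exact zero_mem _
  | add p q _ _ hp hq =>
    exact (Finset.coe_subset.mpr support_add).trans (by push_cast; exact Set.union_subset hp hq)
  | mul p q _ _ hp hq =>
    intro d hd
    obtain ⟨a, ha, b, hb, rfl⟩ := Finset.mem_add.mp (support_mul p q hd)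
    exact add_mem (hp ha) (hq hb)

namespace MonomialOrder

theorem exists_degree_prod_pow_eq_of_monomial_mem_adjoin_leadingTerm
    {τ ι R : Type*} [CommRing R] [IsDomain R] (m : MonomialOrder τ)
    {g : ι → MvPolynomial τ R} (hg : ∀ i, g i ≠ 0) {d : τ →₀ ℕ}
    (hd : monomial d (1 : R) ∈ Algebra.adjoin R (Set.range fun i => m.leadingTerm (g i))) :
    ∃ γ : ι →₀ ℕ, m.degree (γ.prod fun i n => g i ^ n) = d := by
  classical
  have hclosure : d ∈ AddSubmonoid.closure (Set.range fun i => m.degree (g i)) := by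
    refine AddSubmonoid.closure_mono ?_ (support_subset_closure_of_mem_adjoin hd ?_)
    · simp only [Set.iUnion_subset_iff, Set.forall_mem_range]
      intro i e he
      rw [Finset.mem_coe, support_leadingTerm' (hg i), Finset.mem_singleton] at he
      exact ⟨i, he.symm⟩
    · simp [support_monomial]
  obtain ⟨γ, rfl⟩ := AddSubmonoid.mem_closure_range_iff.mp hclosure
  refine ⟨γ, ?_⟩
  rw [Finsupp.prod, degree_prod fun i _ => pow_ne_zero _ (hg i)]
  simp only [degree_pow, Finsupp.sum]

theorem degree_sub_lt_of_leadingTerm_eq_s4 {τ R : Type*} [CommRing R] (m : MonomialOrder τ)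
    {f p : MvPolynomial τ R} (h : m.leadingTerm p = m.leadingTerm f) (hfp : f - p ≠ 0) :
    m.toSyn (m.degree (f - p)) < m.toSyn (m.degree f) := by
  obtain ⟨hcoeff, hdeg⟩ := m.leadingTerm_eq_leadingTerm_iff.mp h
  refine lt_of_le_of_ne (degree_sub_le.trans (by rw [hdeg, sup_idem])) fun heq => ?_
  have hcancel : (f - p).coeff (m.degree f) = 0 := by
    rw [coeff_sub, ← leadingCoeff, ← hdeg, ← leadingCoeff, hcoeff, sub_self]
  exact (m.coeff_degree_ne_zero_iff.mpr hfp) (m.toSyn.injective heq ▸ hcancel)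

variable {τ ι K : Type*} [Field K] (m : MonomialOrder τ) (g : ι → MvPolynomial τ K)

theorem degree'_eq_degree : m.degree' (k := K) = m.degree := rfl

def HasSubductionRep (t : m.syn) (f : MvPolynomial τ K) : Prop :=
  ∃ (q : MvPolynomial ι K) (r : MvPolynomial τ K), f = aeval g q + r ∧
    (∀ d ∈ r.support,
      monomial d (1 : K) ∉ m.initialAlgebra (Algebra.adjoin K (Set.range g))) ∧
    ∀ γ ∈ q.support, m.toSyn (m.degree (γ.prod fun i n => g i ^ n)) ≤ t

namespace HasSubductionRep

variable {m g}

theorem zero (t : m.syn) : HasSubductionRep m g t 0 :=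
  ⟨0, 0, by simp, by simp, by simp⟩

theorem add {t : m.syn} {f₁ f₂ : MvPolynomial τ K} (h₁ : HasSubductionRep m g t f₁)
    (h₂ : HasSubductionRep m g t f₂) : HasSubductionRep m g t (f₁ + f₂) := by
  classical
  obtain ⟨q₁, r₁, rfl, hr₁, hq₁⟩ := h₁
  obtain ⟨q₂, r₂, rfl, hr₂, hq₂⟩ := h₂
  refine ⟨q₁ + q₂, r₁ + r₂, by rw [map_add]; ring, fun d hd => ?_, fun γ hγ => ?_⟩
  · exact (Finset.mem_union.mp (support_add hd)).elim (hr₁ d) (hr₂ d)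
  · exact (Finset.mem_union.mp (support_add hγ)).elim (hq₁ γ) (hq₂ γ)

theorem mono {t t' : m.syn} {f : MvPolynomial τ K} (h : HasSubductionRep m g t f)
    (htt' : t ≤ t') : HasSubductionRep m g t' f := by
  obtain ⟨q, r, hf, hr, hq⟩ := h
  exact ⟨q, r, hf, hr, fun γ hγ => (hq γ hγ).trans htt'⟩

end HasSubductionRep

theorem hasSubductionRep_monomial {d : τ →₀ ℕ}
    (hd : monomial d (1 : K) ∉ m.initialAlgebra (Algebra.adjoin K (Set.range g)))
    (t : m.syn) (c : K) : HasSubductionRep m g t (monomial d c) := by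
  refine ⟨0, monomial d c, by simp, fun e he => ?_, by simp⟩
  rwa [Finset.mem_singleton.mp (support_monomial_subset he)]

theorem hasSubductionRep_aeval_monomial {γ : ι →₀ ℕ} {t : m.syn}
    (hγ : m.toSyn (m.degree (γ.prod fun i n => g i ^ n)) ≤ t) (c : K) :
    HasSubductionRep m g t (aeval g (monomial γ c)) := by
  refine ⟨monomial γ c, 0, by simp, by simp, fun γ' hγ' => ?_⟩
  rwa [Finset.mem_singleton.mp (support_monomial_subset hγ')]

variable {m g}

theorem exists_hasSubductionRep_leadingTerm_eq (hg : ∀ i, g i ≠ 0)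
    (hbasis : m.initialAlgebra (Algebra.adjoin K (Set.range g)) ≤
      Algebra.adjoin K (Set.range fun i => m.leadingTerm (g i)))
    (f : MvPolynomial τ K) :
    ∃ p, HasSubductionRep m g (m.toSyn (m.degree f)) p ∧ m.leadingTerm p = m.leadingTerm f := by
  by_cases hmem : monomial (m.degree f) (1 : K) ∈ m.initialAlgebra (Algebra.adjoin K (Set.range g))
  · obtain ⟨γ, hγ⟩ :=
      exists_degree_prod_pow_eq_of_monomial_mem_adjoin_leadingTerm m hg (hbasis hmem)
    set G := γ.prod fun i n => g i ^ n
    have hG : G ≠ 0 := Finset.prod_ne_zero_iff.mpr fun i _ => pow_ne_zero _ (hg i)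
    refine ⟨aeval g (monomial γ (m.leadingCoeff f / m.leadingCoeff G)),
      hasSubductionRep_aeval_monomial m g (congrArg m.toSyn hγ).le _, ?_⟩
    rw [aeval_monomial, leadingTerm_mul, algebraMap_eq, leadingTerm_C, leadingTerm, C_mul_monomial,
      div_mul_cancel₀ _ (m.leadingCoeff_ne_zero_iff.mpr hG), hγ, leadingTerm]
  · exact ⟨m.leadingTerm f, hasSubductionRep_monomial m g hmem _ _, m.leadingTerm_leadingTerm f⟩

theorem hasSubductionRep_degree (hg : ∀ i, g i ≠ 0)
    (hbasis : m.initialAlgebra (Algebra.adjoin K (Set.range g)) ≤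
      Algebra.adjoin K (Set.range fun i => m.leadingTerm (g i)))
    (f : MvPolynomial τ K) : HasSubductionRep m g (m.toSyn (m.degree f)) f := by
  induction h : m.toSyn (m.degree f) using WellFoundedLT.induction generalizing f with
  | ind t ih =>
  subst h
  obtain ⟨p, hp, hlead⟩ := exists_hasSubductionRep_leadingTerm_eq hg hbasis f
  have hrest : HasSubductionRep m g (m.toSyn (m.degree f)) (f - p) := by
    by_cases hfp : f - p = 0
    · exact hfp ▸ .zero _
    have hlt := degree_sub_lt_of_leadingTerm_eq_s4 m hlead hfp
    exact (ih _ hlt _ rfl).mono hlt.le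
  simpa only [add_sub_cancel] using hp.add hrest

end MonomialOrder

theorem subduction_representation_general (m : MonomialOrder σ) {s : ℕ}
    (g : Fin s → MvPolynomial σ k) (hg : ∀ i, g i ≠ 0)
    (hbasis : ∀ a ∈ Algebra.adjoin k (Set.range g), a ≠ 0 →
      m.leadTerm a ∈ Algebra.adjoin k (Set.range fun i => m.leadTerm (g i)))
    (f : MvPolynomial σ k) :
    ∃ (q : MvPolynomial (Fin s) k) (r : MvPolynomial σ k),
      f = MvPolynomial.aeval g q + r ∧
      (∀ d ∈ r.support,
        (monomial d (1 : k)) ∉ m.initialAlgebra (Algebra.adjoin k (Set.range g))) ∧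
      (∀ γ ∈ q.support,
        m.toSyn (m.degree' (∏ i, (g i) ^ (γ i))) ≤ m.toSyn (m.degree' f)) := by
  have hbasis' : m.initialAlgebra (Algebra.adjoin k (Set.range g)) ≤
      Algebra.adjoin k (Set.range fun i => m.leadingTerm (g i)) :=
    Algebra.adjoin_le fun _ ⟨a, ha, ha0, hp⟩ => hp ▸ hbasis a ha ha0
  obtain ⟨q, r, hfqr, hr, hq⟩ := m.hasSubductionRep_degree hg hbasis' f
  refine ⟨q, r, hfqr, hr, fun γ hγ => ?_⟩
  simpa only [m.degree'_eq_degree, Finsupp.prod_pow] using hq γ hγ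

/-- Subduction representation. -/
theorem subduction_representation (m : MonomialOrder σ) {s : ℕ}
    (g : Fin s → MvPolynomial σ k) (hg : ∀ i, g i ≠ 0)
    (hbasis : ∀ a ∈ Algebra.adjoin k (Set.range g), a ≠ 0 →
      m.leadTerm a ∈ Algebra.adjoin k (Set.range fun i => m.leadTerm (g i)))
    (f : MvPolynomial σ k) (hf : f ≠ 0) :
    ∃ (q : MvPolynomial (Fin s) k) (r : MvPolynomial σ k),
      f = MvPolynomial.aeval g q + r ∧
      (∀ d ∈ r.support,
        (monomial d (1 : k)) ∉ m.initialAlgebra (Algebra.adjoin k (Set.range g))) ∧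
      (∀ γ ∈ q.support,
        m.toSyn (m.degree' (∏ i, (g i) ^ (γ i))) ≤ m.toSyn (m.degree' f)) :=
  subduction_representation_general m g hg hbasis f
end
end

section
/- In MvPolynomial (Fin 2) ℚ with variables X and Y, for every natural number k ≥ 1 the polynomial X·Y^k lies in the ℚ-subalgebra A = Algebra.adjoin ℚ {X + Y, X·Y, X·Y²}. -/
open MvPolynomial

theorem xyk_mem_adjoin (k : ℕ) (hk : 1 ≤ k) :
    (X 0 * X 1 ^ k : MvPolynomial (Fin 2) ℚ) ∈
      Algebra.adjoin ℚ ({X 0 + X 1, X 0 * X 1, X 0 * X 1 ^ 2} :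
        Set (MvPolynomial (Fin 2) ℚ)) := by
  set A := Algebra.adjoin ℚ ({X 0 + X 1, X 0 * X 1, X 0 * X 1 ^ 2} :
        Set (MvPolynomial (Fin 2) ℚ)) with hA
  have h1 : (X 0 + X 1 : MvPolynomial (Fin 2) ℚ) ∈ A := Algebra.subset_adjoin (by simp)
  have h2 : (X 0 * X 1 : MvPolynomial (Fin 2) ℚ) ∈ A := Algebra.subset_adjoin (by simp)
  have h3 : (X 0 * X 1 ^ 2 : MvPolynomial (Fin 2) ℚ) ∈ A := Algebra.subset_adjoin (by simp)
  have key : ∀ n, (X 0 * X 1 ^ (n+1) : MvPolynomial (Fin 2) ℚ) ∈ A ∧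
      (X 0 * X 1 ^ (n+2) : MvPolynomial (Fin 2) ℚ) ∈ A := by
    intro n
    induction n with
    | zero => exact ⟨by simpa using h2, h3⟩
    | succ m ih =>
      refine ⟨ih.2, ?_⟩
      have heq : (X 0 * X 1 ^ (m+3) : MvPolynomial (Fin 2) ℚ) =
          (X 0 + X 1) * (X 0 * X 1 ^ (m+2)) - (X 0 * X 1) * (X 0 * X 1 ^ (m+1)) := by ring
      rw [heq]
      exact Subalgebra.sub_mem A (A.mul_mem h1 ih.2) (A.mul_mem h2 ih.1)
  obtain ⟨m, rfl⟩ := Nat.exists_eq_add_of_le hk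
  simpa [add_comm] using (key m).1
end

section
/- Let S = ℚ[x,y] ⧸ (x³ + x·y² + y³) with quotient map π, and set A₁ = Algebra.adjoin ℚ {π(x²), π(x·y)} and A₂ = Algebra.adjoin ℚ {π(x), π(y²)}. Then the intersection A₁ ⊓ A₂ equals Algebra.adjoin ℚ {π(x²), π(x²·y² + x·y³), π(y⁴), π(x·y³), π(y⁶), π(x·y⁵)}. -/
open MvPolynomial

noncomputable section

namespace IntersectionExample

/-- The variable `x` in `ℚ[x,y]`. -/
def x : MvPolynomial (Fin 2) ℚ := X 0

/-- The variable `y` in `ℚ[x,y]`. -/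
def y : MvPolynomial (Fin 2) ℚ := X 1

/-- The quotient ring `S = ℚ[x,y] ⧸ (x³ + x·y² + y³)`. -/
abbrev S := MvPolynomial (Fin 2) ℚ ⧸ Ideal.span {x ^ 3 + x * y ^ 2 + y ^ 3}

/-- The quotient map `π : ℚ[x,y] → S`. -/
def π : MvPolynomial (Fin 2) ℚ →ₐ[ℚ] S := Ideal.Quotient.mkₐ ℚ _

/-- The subalgebra `A₁ = ℚ[x², xy]` of `S`. -/
def A₁ : Subalgebra ℚ S := Algebra.adjoin ℚ {π (x ^ 2), π (x * y)}

/-- The subalgebra `A₂ = ℚ[x, y²]` of `S`. -/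
def A₂ : Subalgebra ℚ S := Algebra.adjoin ℚ {π x, π (y ^ 2)}

end IntersectionExample

/-!
Write `u = π x` and `v = π y`. The relation `v³ = -u³ - u v²` lowers the exponent of `v` in a
monomial without changing its total degree. Hence every monomial of even degree at least `4`
lies in any subring containing `u²`, `u³v` and `u²v²`, and `u^a v^b` lies in `ℚ[u, v²]` unless
`b = 1`; this gives `⊇`.

Conversely, lift `s ∈ A₁ ⊓ A₂` to `p₁ ∈ ℚ[x², xy]` and `p₂ ∈ ℚ[x, y²]`. Their difference is a
multiple of the homogeneous cubic, so it has no `xy` term; neither has `p₂`, hence neither has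
`p₁`. So every monomial of `p₁` is `1`, `x²` or of even degree at least `4`, and each of these
maps into the right-hand side.
-/

section CubicRelation

variable {R A : Type*} [CommRing R] [CommRing A] [Algebra R A] {u v : A}

theorem pow_mul_pow_mem_of_even_of_four_le {T : Type*} [SetLike T A] [SubringClass T A] (t : T)
    (huv : u ^ 3 + u * v ^ 2 + v ^ 3 = 0) (h20 : u ^ 2 ∈ t) (h31 : u ^ 3 * v ∈ t)
    (h22 : u ^ 2 * v ^ 2 ∈ t) {a b : ℕ} (hev : Even (a + b)) (h4 : 4 ≤ a + b) :
    u ^ a * v ^ b ∈ t := by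
  induction b using Nat.strong_induction_on generalizing a with
  | _ b ih =>
  obtain ⟨k, hk⟩ : ∃ k, a + b = 2 * k + 4 := by obtain ⟨j, hj⟩ := hev; exact ⟨j - 2, by omega⟩
  have hpow : (u ^ 2) ^ k ∈ t := pow_mem h20 k
  rcases Nat.lt_or_ge b 3 with hb | hb
  · interval_cases b
    · convert mul_mem hpow (pow_mem h20 2) using 1
      rw [show a = 2 * k + 4 by omega]; ring
    · convert mul_mem hpow h31 using 1
      rw [show a = 2 * k + 3 by omega]; ring
    · convert mul_mem hpow h22 using 1
      rw [show a = 2 * k + 2 by omega]; ring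
  · obtain ⟨c, rfl⟩ := Nat.exists_eq_add_of_le' hb
    have hred : u ^ a * v ^ (c + 3) = -(u ^ (a + 3) * v ^ c) - u ^ (a + 1) * v ^ (c + 2) := by
      linear_combination u ^ a * v ^ c * huv
    rw [hred]
    exact sub_mem (neg_mem (ih c (by omega) ⟨k + 2, by omega⟩ (by omega)))
      (ih (c + 2) (by omega) ⟨k + 2, by omega⟩ (by omega))

theorem pow_mul_pow_mem_adjoin_of_ne_one (huv : u ^ 3 + u * v ^ 2 + v ^ 3 = 0) {a b : ℕ}
    (hb : b ≠ 1) : u ^ a * v ^ b ∈ Algebra.adjoin R {u, v ^ 2} := by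
  have hu : u ∈ Algebra.adjoin R {u, v ^ 2} := Algebra.subset_adjoin (by simp)
  have hv2 : v ^ 2 ∈ Algebra.adjoin R {u, v ^ 2} := Algebra.subset_adjoin (by simp)
  obtain ⟨k, rfl | rfl⟩ := Nat.even_or_odd' b
  · rw [pow_mul]
    exact mul_mem (pow_mem hu a) (pow_mem hv2 k)
  · obtain ⟨j, rfl⟩ : ∃ j, k = j + 1 := ⟨k - 1, by omega⟩
    have hv3 : v ^ 3 = -(u ^ 3 + u * v ^ 2) := by linear_combination huv
    rw [show 2 * (j + 1) + 1 = 2 * j + 3 by ring, pow_add, pow_mul, hv3]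
    exact mul_mem (pow_mem hu a)
      (mul_mem (pow_mem hv2 j) (neg_mem (add_mem (pow_mem hu 3) (mul_mem hu hv2))))

theorem pow_mul_pow_mem_adjoin_gens (huv : u ^ 3 + u * v ^ 2 + v ^ 3 = 0) {a b : ℕ}
    (hev : Even (a + b)) (hlow : a + b = 2 → b = 0) :
    u ^ a * v ^ b ∈ Algebra.adjoin R
      {u ^ 2, u ^ 2 * v ^ 2 + u * v ^ 3, v ^ 4, u * v ^ 3, v ^ 6, u * v ^ 5} := by
  set T := Algebra.adjoin R
    {u ^ 2, u ^ 2 * v ^ 2 + u * v ^ 3, v ^ 4, u * v ^ 3, v ^ 6, u * v ^ 5}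
  have h20 : u ^ 2 ∈ T := Algebra.subset_adjoin (by simp)
  have h13 : u * v ^ 3 ∈ T := Algebra.subset_adjoin (by simp)
  have h31 : u ^ 3 * v ∈ T := by
    rw [show u ^ 3 * v = -(u * v ^ 3) - v ^ 4 by linear_combination v * huv]
    exact sub_mem (neg_mem h13) (Algebra.subset_adjoin (by simp))
  have h22 : u ^ 2 * v ^ 2 ∈ T := by
    rw [← add_sub_cancel_right (u ^ 2 * v ^ 2) (u * v ^ 3)]
    exact sub_mem (Algebra.subset_adjoin (by simp)) h13
  obtain h0 | h2 | h4 : a + b = 0 ∨ a + b = 2 ∨ 4 ≤ a + b := by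
    obtain ⟨k, hk⟩ := hev; omega
  · obtain ⟨rfl, rfl⟩ : a = 0 ∧ b = 0 := by omega
    simp
  · obtain ⟨rfl, rfl⟩ : a = 2 ∧ b = 0 := by have := hlow h2; omega
    simpa using h20
  · exact pow_mul_pow_mem_of_even_of_four_le T huv h20 h31 h22 hev h4

theorem adjoin_gens_le_inf (huv : u ^ 3 + u * v ^ 2 + v ^ 3 = 0) :
    Algebra.adjoin R {u ^ 2, u ^ 2 * v ^ 2 + u * v ^ 3, v ^ 4, u * v ^ 3, v ^ 6, u * v ^ 5} ≤
      Algebra.adjoin R {u ^ 2, u * v} ⊓ Algebra.adjoin R {u, v ^ 2} := by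
  have hu2 : u ^ 2 ∈ Algebra.adjoin R {u ^ 2, u * v} := Algebra.subset_adjoin (by simp)
  have huv₁ : u * v ∈ Algebra.adjoin R {u ^ 2, u * v} := Algebra.subset_adjoin (by simp)
  have h31 : u ^ 3 * v ∈ Algebra.adjoin R {u ^ 2, u * v} := by
    rw [show u ^ 3 * v = u ^ 2 * (u * v) by ring]
    exact mul_mem hu2 huv₁
  have h22 : u ^ 2 * v ^ 2 ∈ Algebra.adjoin R {u ^ 2, u * v} := by
    rw [← mul_pow]
    exact pow_mem huv₁ 2
  have hmem {a b : ℕ} (hev : Even (a + b)) (h4 : 4 ≤ a + b) (hb : b ≠ 1) :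
      u ^ a * v ^ b ∈ Algebra.adjoin R {u ^ 2, u * v} ⊓ Algebra.adjoin R {u, v ^ 2} :=
    Algebra.mem_inf.mpr ⟨pow_mul_pow_mem_of_even_of_four_le _ huv hu2 h31 h22 hev h4,
      pow_mul_pow_mem_adjoin_of_ne_one huv hb⟩
  rw [Algebra.adjoin_le_iff]
  rintro g (rfl | rfl | rfl | rfl | rfl | rfl)
  · exact Algebra.mem_inf.mpr ⟨hu2, pow_mem (Algebra.subset_adjoin (by simp)) 2⟩
  · exact add_mem (hmem (a := 2) (b := 2) (by decide) le_rfl (by decide))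
      (by simpa using hmem (a := 1) (b := 3) (by decide) le_rfl (by decide))
  · simpa using hmem (a := 0) (b := 4) (by decide) le_rfl (by decide)
  · simpa using hmem (a := 1) (b := 3) (by decide) le_rfl (by decide)
  · simpa using hmem (a := 0) (b := 6) (by decide) (by decide) (by decide)
  · simpa using hmem (a := 1) (b := 5) (by decide) (by decide) (by decide)

end CubicRelation

section PolynomialSupport

variable {σ R : Type*} [CommSemiring R]

theorem MvPolynomial.support_subset_of_mem_adjoin (M : AddSubmonoid (σ →₀ ℕ))
    {s : Set (MvPolynomial σ R)} (hs : ∀ g ∈ s, ↑g.support ⊆ (M : Set (σ →₀ ℕ)))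
    {p : MvPolynomial σ R} (hp : p ∈ Algebra.adjoin R s) : ↑p.support ⊆ (M : Set (σ →₀ ℕ)) := by
  classical
  induction hp using Algebra.adjoin_induction with
  | mem g hg => exact hs g hg
  | algebraMap r =>
    intro m hm
    rw [Finset.mem_singleton.mp (support_monomial_subset hm)]
    exact M.zero_mem
  | add p q _ _ hp hq =>
    intro m hm
    rcases Finset.mem_union.mp (support_add hm) with h | h
    exacts [hp h, hq h]
  | mul p q _ _ hp hq =>
    intro m hm
    obtain ⟨a, ha, b, hb, rfl⟩ := Finset.mem_add.mp (support_mul p q hm)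
    exact M.add_mem (hp ha) (hq hb)

theorem MvPolynomial.IsHomogeneous.coeff_mul_eq_zero_of_degree_lt {f : MvPolynomial σ R} {n : ℕ}
    (hf : f.IsHomogeneous n) {d : σ →₀ ℕ} (hd : d.degree < n) (g : MvPolynomial σ R) :
    coeff d (f * g) = 0 := by
  classical
  rw [coeff_mul]
  refine Finset.sum_eq_zero fun e he => ?_
  have hle : e.1 ≤ d := by
    rw [← Finset.HasAntidiagonal.mem_antidiagonal.mp he]; exact le_self_add
  rw [hf.coeff_eq_zero (Finsupp.degree_mono hle |>.trans_lt hd).ne, zero_mul]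

theorem MvPolynomial.map_mem_of_forall_monomial_mem {A : Type*} [Semiring A] [Algebra R A]
    (φ : MvPolynomial σ R →ₐ[R] A) (T : Subalgebra R A) {p : MvPolynomial σ R}
    (h : ∀ m ∈ p.support, φ (monomial m 1) ∈ T) : φ p ∈ T := by
  rw [p.as_sum, map_sum]
  refine T.sum_mem fun m hm => ?_
  rw [← mul_one (coeff m p), ← smul_eq_mul, ← smul_monomial, map_smul]
  exact T.smul_mem (h m hm) _

end PolynomialSupport

namespace IntersectionExample

theorem isHomogeneous_cubic : (x ^ 3 + x * y ^ 2 + y ^ 3).IsHomogeneous 3 :=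
  ((isHomogeneous_X_pow _ _).add ((isHomogeneous_X _ _).mul (isHomogeneous_X_pow _ _))).add
    (isHomogeneous_X_pow _ _)

theorem π_cubic_eq_zero : π x ^ 3 + π x * π y ^ 2 + π y ^ 3 = 0 := by
  simp only [← map_pow, ← map_mul, ← map_add]
  exact Ideal.Quotient.eq_zero_iff_mem.mpr (Ideal.subset_span rfl)

theorem π_monomial_one (m : Fin 2 →₀ ℕ) : π (monomial m 1) = π x ^ m 0 * π y ^ m 1 := by
  rw [monomial_eq, C_1, one_mul, Finsupp.prod_fintype _ _ (by simp), Fin.prod_univ_two, map_mul,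
    map_pow, map_pow]
  rfl

theorem A₁_eq_map : A₁ = (Algebra.adjoin ℚ {x ^ 2, x * y}).map π := by
  rw [AlgHom.map_adjoin, Set.image_pair]; rfl

theorem A₂_eq_map : A₂ = (Algebra.adjoin ℚ {x, y ^ 2}).map π := by
  rw [AlgHom.map_adjoin, Set.image_pair]; rfl

def exponents₁ : AddSubmonoid (Fin 2 →₀ ℕ) where
  carrier := {m | Even (m 0 + m 1) ∧ m 1 ≤ m 0}
  zero_mem' := by simp
  add_mem' := by
    rintro m n ⟨⟨i, hi⟩, hm⟩ ⟨⟨j, hj⟩, hn⟩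
    exact ⟨⟨i + j, by simp only [Finsupp.add_apply]; omega⟩, by simp only [Finsupp.add_apply]; omega⟩

def exponents₂ : AddSubmonoid (Fin 2 →₀ ℕ) :=
  (AddSubmonoid.even ℕ).comap (Finsupp.applyAddHom 1)

theorem support_subset_exponents₁ {p : MvPolynomial (Fin 2) ℚ}
    (hp : p ∈ Algebra.adjoin ℚ {x ^ 2, x * y}) : ↑p.support ⊆ (exponents₁ : Set (Fin 2 →₀ ℕ)) := by
  refine support_subset_of_mem_adjoin _ ?_ hp
  rintro g (rfl | rfl) <;> simp [x, y, X, monomial_mul, monomial_pow, support_monomial, exponents₁]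

theorem support_subset_exponents₂ {p : MvPolynomial (Fin 2) ℚ}
    (hp : p ∈ Algebra.adjoin ℚ {x, y ^ 2}) : ↑p.support ⊆ (exponents₂ : Set (Fin 2 →₀ ℕ)) := by
  refine support_subset_of_mem_adjoin _ ?_ hp
  rintro g (rfl | rfl) <;> simp [x, y, X, monomial_pow, support_monomial, exponents₂]

def B : Subalgebra ℚ S :=
  Algebra.adjoin ℚ
    {π (x ^ 2), π (x ^ 2 * y ^ 2 + x * y ^ 3), π (y ^ 4), π (x * y ^ 3), π (y ^ 6), π (x * y ^ 5)}

theorem B_eq_adjoin :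
    B = Algebra.adjoin ℚ {π x ^ 2, π x ^ 2 * π y ^ 2 + π x * π y ^ 3, π y ^ 4, π x * π y ^ 3,
      π y ^ 6, π x * π y ^ 5} := by
  simp only [B, map_add, map_mul, map_pow]

theorem inf_le_B : A₁ ⊓ A₂ ≤ B := by
  intro s hs
  obtain ⟨⟨p₁, hp₁, rfl⟩, ⟨p₂, hp₂, hp⟩⟩ :
      s ∈ (Algebra.adjoin ℚ {x ^ 2, x * y}).map π ∧ s ∈ (Algebra.adjoin ℚ {x, y ^ 2}).map π := by
    rwa [← A₁_eq_map, ← A₂_eq_map, ← Algebra.mem_inf]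
  obtain ⟨t, ht⟩ : x ^ 3 + x * y ^ 2 + y ^ 3 ∣ p₂ - p₁ :=
    Ideal.mem_span_singleton.mp (Ideal.Quotient.eq.mp hp)
  set xy : Fin 2 →₀ ℕ := Finsupp.single 0 1 + Finsupp.single 1 1 with hxy
  have hcoeff : coeff xy p₁ = 0 := by
    have h₂ : coeff xy p₂ = 0 := notMem_support_iff.mp fun h => by
      simpa [hxy, exponents₂] using support_subset_exponents₂ hp₂ h
    have h := isHomogeneous_cubic.coeff_mul_eq_zero_of_degree_lt (d := xy) (by simp [hxy]) t
    rwa [← ht, coeff_sub, h₂, zero_sub, neg_eq_zero] at h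
  refine map_mem_of_forall_monomial_mem π B fun m hm => ?_
  obtain ⟨hev, hle⟩ := support_subset_exponents₁ hp₁ hm
  rw [π_monomial_one, B_eq_adjoin]
  refine pow_mul_pow_mem_adjoin_gens π_cubic_eq_zero hev fun h2 => ?_
  by_contra hb
  have hm_eq : m = xy := by
    ext i; fin_cases i <;> simp [hxy] <;> omega
  exact mem_support_iff.mp hm (hm_eq ▸ hcoeff)

/-- The intersection `A₁ ⊓ A₂` equals the `ℚ`-subalgebra generated by the six listed
elements. -/
theorem inf_eq_adjoin :
    A₁ ⊓ A₂ =
      Algebra.adjoin ℚ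
        {π (x ^ 2), π (x ^ 2 * y ^ 2 + x * y ^ 3), π (y ^ 4), π (x * y ^ 3),
          π (y ^ 6), π (x * y ^ 5)} := by
  refine le_antisymm inf_le_B ?_
  simpa only [A₁, A₂, map_add, map_mul, map_pow] using adjoin_gens_le_inf π_cubic_eq_zero

end IntersectionExample
end
end

section
/- Translational invariants of a screw: in the polynomial ring R = ℚ[t₁, t₂, t₃, w₁, w₂, w₃, v₁, v₂, v₃], with g₁ = −t₃·w₂ + t₂·w₃ + v₁, g₂ = t₃·w₁ − t₁·w₃ + v₂, g₃ = −t₂·w₁ + t₁·w₂ + v₃, the intersection of the subalgebra A = Algebra.adjoin ℚ {w₁, w₂, w₃, g₁, g₂, g₃} with the subalgebra Algebra.adjoin ℚ {w₁, w₂, w₃, v₁, v₂, v₃} of polynomials in the variables w and v alone equals Algebra.adjoin ℚ {w₁, w₂, w₃, w₁·v₁ + w₂·v₂ + w₃·v₃}. -/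
/-!
Write `g = v + t × w` and `s = w·v`. For `b ∈ {1, 3}`, substituting `t = v × e_b` and rescaling
`v` to `w_b v` sends `g` to `s e_b` and fixes `w`, so it maps `ℚ[w, g]` into `ℚ[w, s]`, while on
`ℚ[w, v]` it is just the rescaling `μ_b`. Hence for `x` in the intersection, `μ₃ x = H(w, s)` and
`μ₁ x = K(w, s)`. Since `w₁, w₂, w₃, s` are algebraically independent and `μ₁ μ₃ = μ₃ μ₁`, this
gives `H(w, w₁ s) = K(w, w₃ s)` as polynomials; comparing monomials, every monomial of `H` has
at least as many factors `w₃` as factors `s`, i.e. `H(w, s) = G(w, w₃ s)`. Then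
`μ₃ x = μ₃ (G(w, s))`, and `μ₃` is injective, so `x = G(w, s)`.
-/

open MvPolynomial

noncomputable section

namespace ScrewExample

/-- The polynomial ring `ℚ[t₁, t₂, t₃, w₁, w₂, w₃, v₁, v₂, v₃]`. -/
abbrev R := MvPolynomial (Fin 9) ℚ

def t₁ : R := X 0
def t₂ : R := X 1
def t₃ : R := X 2
def w₁ : R := X 3
def w₂ : R := X 4
def w₃ : R := X 5
def v₁ : R := X 6
def v₂ : R := X 7
def v₃ : R := X 8

def g₁ : R := -t₃ * w₂ + t₂ * w₃ + v₁
def g₂ : R := t₃ * w₁ - t₁ * w₃ + v₂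
def g₃ : R := -t₂ * w₁ + t₁ * w₂ + v₃

end ScrewExample

namespace MvPolynomial

variable {R σ τ : Type*} [CommSemiring R]

section monomialMap

def monomialMap (e : (σ →₀ ℕ) →+ (τ →₀ ℕ)) : MvPolynomial σ R →ₐ[R] MvPolynomial τ R :=
  AddMonoidAlgebra.mapDomainAlgHom R R e

variable {e : (σ →₀ ℕ) →+ (τ →₀ ℕ)}

theorem monomialMap_monomial (d : σ →₀ ℕ) (r : R) :
    monomialMap e (monomial d r) = monomial (e d) r := by
  simp [monomialMap, monomial]

theorem coeff_monomialMap (he : Function.Injective e) (p : MvPolynomial σ R) (d : σ →₀ ℕ) :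
    (monomialMap e p).coeff (e d) = p.coeff d :=
  Finsupp.mapDomain_apply he (AddMonoidAlgebra.coeff p) d

theorem coeff_monomialMap_of_notMem_range (p : MvPolynomial σ R) {d : τ →₀ ℕ}
    (hd : d ∉ Set.range e) : (monomialMap e p).coeff d = 0 :=
  Finsupp.mapDomain_of_notMem_range (AddMonoidAlgebra.coeff p) d hd

theorem monomialMap_injective (he : Function.Injective e) :
    Function.Injective (monomialMap e : MvPolynomial σ R → MvPolynomial τ R) :=
  AddMonoidAlgebra.mapDomain_injective he

theorem exists_monomialMap_eq (he : Function.Injective e) {p : MvPolynomial τ R}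
    (hp : ↑p.support ⊆ Set.range e) : ∃ q : MvPolynomial σ R, monomialMap e q = p :=
  ⟨.ofCoeff (Finsupp.comapDomain e (AddMonoidAlgebra.coeff p) he.injOn),
    AddMonoidAlgebra.coeff_injective (Finsupp.mapDomain_comapDomain _ he _ hp)⟩

end monomialMap

section scaleVar

def scaleVarExponent (a z : σ) : (σ →₀ ℕ) →+ (σ →₀ ℕ) :=
  .id _ + (Finsupp.singleAddHom a).comp (Finsupp.applyAddHom z)

@[simp]
theorem scaleVarExponent_apply (a z : σ) (d : σ →₀ ℕ) :
    scaleVarExponent a z d = d + Finsupp.single a (d z) := rfl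

theorem scaleVarExponent_injective (a z : σ) : Function.Injective (scaleVarExponent a z) := by
  classical
  intro d d' h
  have hz : d z = d' z := by
    have := DFunLike.congr_fun h z
    simp only [scaleVarExponent_apply, Finsupp.add_apply, Finsupp.single_apply] at this
    split_ifs at this <;> omega
  simpa [hz] using h

theorem mem_range_scaleVarExponent_iff {a z : σ} (haz : a ≠ z) {d : σ →₀ ℕ} :
    d ∈ Set.range (scaleVarExponent a z) ↔ d z ≤ d a := by
  constructor
  · rintro ⟨d, rfl⟩
    simp [haz]
  · intro h
    refine ⟨d - Finsupp.single a (d z), ?_⟩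
    have hz : (d - Finsupp.single a (d z)) z = d z := by simp [haz]
    rw [scaleVarExponent_apply, hz, tsub_add_cancel_of_le (Finsupp.single_le_iff.mpr h)]

def scaleVar (a z : σ) : MvPolynomial σ R →ₐ[R] MvPolynomial σ R :=
  monomialMap (scaleVarExponent a z)

@[simp]
theorem scaleVar_X_self (a z : σ) : scaleVar a z (X z : MvPolynomial σ R) = X a * X z := by
  simp [scaleVar, X, monomialMap_monomial, monomial_mul, add_comm]

@[simp]
theorem scaleVar_X_of_ne {a z i : σ} (h : i ≠ z) :
    scaleVar a z (X i : MvPolynomial σ R) = X i := by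
  rw [scaleVar, X, monomialMap_monomial]
  simp [Ne.symm h]

theorem scaleVar_injective (a z : σ) :
    Function.Injective (scaleVar a z : MvPolynomial σ R → MvPolynomial σ R) :=
  monomialMap_injective (scaleVarExponent_injective a z)

-- `scaleVar a z` sends the monomial `x^d` of `p` to `x^d x_a^(d z)`, which is in the image of
-- `scaleVar c z` only if `d z ≤ d c`
theorem exists_scaleVar_eq_of_scaleVar_eq {a c z : σ} (hac : a ≠ c) (haz : a ≠ z) (hcz : c ≠ z)
    {p q : MvPolynomial σ R} (h : scaleVar a z p = scaleVar c z q) :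
    ∃ r, scaleVar c z r = p := by
  refine exists_monomialMap_eq (scaleVarExponent_injective c z) fun d hd => ?_
  have hne : (scaleVar c z q).coeff (scaleVarExponent a z d) ≠ 0 := by
    rwa [← h, scaleVar, coeff_monomialMap (scaleVarExponent_injective a z), ← mem_support_iff]
  have hmem := not_imp_comm.mp (coeff_monomialMap_of_notMem_range q) hne
  rw [mem_range_scaleVarExponent_iff hcz] at hmem ⊢
  simpa [Finsupp.single_apply, haz, hac] using hmem

theorem mem_range_of_scale_mem_range {S : Type*} [Semiring S] [Algebra R S]
    {ι : MvPolynomial σ R →ₐ[R] S} (hι : Function.Injective ι) {a c z : σ} (hac : a ≠ c)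
    (haz : a ≠ z) (hcz : c ≠ z) {μ ν : S →ₐ[R] S} (hμ : Function.Injective μ)
    (hμν : ∀ x, ν (μ x) = μ (ν x)) (hμι : ∀ p, μ (ι p) = ι (scaleVar c z p))
    (hνι : ∀ p, ν (ι p) = ι (scaleVar a z p)) {x : S} (hμx : μ x ∈ ι.range)
    (hνx : ν x ∈ ι.range) : x ∈ ι.range := by
  obtain ⟨p, hp⟩ := ι.mem_range.mp hμx
  obtain ⟨q, hq⟩ := ι.mem_range.mp hνx
  have hpq : scaleVar a z p = scaleVar c z q := hι <| by rw [← hνι, ← hμι, hp, hq, hμν]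
  obtain ⟨r, rfl⟩ := exists_scaleVar_eq_of_scaleVar_eq hac haz hcz hpq
  exact ι.mem_range.mpr ⟨r, hμ <| by rw [hμι, hp]⟩

end scaleVar

end MvPolynomial

namespace ScrewExample

def invariantMap : MvPolynomial (Fin 4) ℚ →ₐ[ℚ] R :=
  aeval ![w₁, w₂, w₃, w₁ * v₁ + w₂ * v₂ + w₃ * v₃]

theorem range_invariantMap :
    invariantMap.range = Algebra.adjoin ℚ {w₁, w₂, w₃, w₁ * v₁ + w₂ * v₂ + w₃ * v₃} := by
  rw [invariantMap, ← Algebra.adjoin_range_eq_range_aeval]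
  simp only [Matrix.range_cons, Matrix.range_empty, Set.union_empty, Set.singleton_union]

theorem invariantMap_injective : Function.Injective invariantMap := by
  -- killing `v₁, v₂` turns `w·v` into the monomial `w₃ v₃`
  let kill : R →ₐ[ℚ] R := aeval ![t₁, t₂, t₃, w₁, w₂, w₃, 0, 0, v₃]
  have h : kill.comp invariantMap = (scaleVar 5 8).comp (rename ![3, 4, 5, 8]) := by
    refine algHom_ext fun i => ?_
    fin_cases i <;> simp [kill, invariantMap, t₁, t₂, t₃, w₁, w₂, w₃, v₁, v₂, v₃]
  refine Function.Injective.of_comp (f := kill) ?_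
  rw [← AlgHom.coe_comp, h, AlgHom.coe_comp]
  exact (scaleVar_injective 5 8).comp (rename_injective _ (by decide))

def wVar : Fin 3 → Fin 9 := ![3, 4, 5]

def scaleV (b : Fin 3) : R →ₐ[ℚ] R :=
  (scaleVar (wVar b) 6).comp ((scaleVar (wVar b) 7).comp (scaleVar (wVar b) 8))

theorem scaleV_injective (b : Fin 3) : Function.Injective (scaleV b) :=
  (scaleVar_injective _ 6).comp ((scaleVar_injective _ 7).comp (scaleVar_injective _ 8))

theorem scaleV_scaleV_comm (b b' : Fin 3) (x : R) :
    scaleV b (scaleV b' x) = scaleV b' (scaleV b x) := by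
  suffices (scaleV b).comp (scaleV b') = (scaleV b').comp (scaleV b) from
    AlgHom.congr_fun this x
  refine algHom_ext fun i => ?_
  fin_cases b <;> fin_cases b' <;> fin_cases i <;> simp [scaleV, wVar, mul_left_comm]

theorem scaleV_invariantMap (b : Fin 3) (p : MvPolynomial (Fin 4) ℚ) :
    scaleV b (invariantMap p) = invariantMap (scaleVar b.castSucc 3 p) := by
  suffices (scaleV b).comp invariantMap = invariantMap.comp (scaleVar b.castSucc 3) from
    AlgHom.congr_fun this p
  refine algHom_ext fun i => ?_
  fin_cases b <;> fin_cases i <;>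
    simp [scaleV, wVar, invariantMap, w₁, w₂, w₃, v₁, v₂, v₃, mul_add, mul_left_comm]

-- `(v × e_b) × w = (w·v) e_b - w_b v`, so this sends `g = v + t × w` to `(w·v) e_b`.
def straighten (b : Fin 3) : R →ₐ[ℚ] R :=
  let t := crossProduct ![v₁, v₂, v₃] (Pi.single b 1)
  aeval ![t 0, t 1, t 2, w₁, w₂, w₃, X (wVar b) * v₁, X (wVar b) * v₂, X (wVar b) * v₃]

theorem map_straighten_le (b : Fin 3) :
    (Algebra.adjoin ℚ {w₁, w₂, w₃, g₁, g₂, g₃}).map (straighten b) ≤ invariantMap.range := by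
  rw [AlgHom.map_adjoin, Algebra.adjoin_le_iff, Set.image_subset_iff]
  simp only [Set.insert_subset_iff, Set.singleton_subset_iff, Set.mem_preimage]
  let s : Fin 3 → MvPolynomial (Fin 4) ℚ := Pi.single b (X 3)
  refine ⟨⟨X 0, ?_⟩, ⟨X 1, ?_⟩, ⟨X 2, ?_⟩, ⟨s 0, ?_⟩, ⟨s 1, ?_⟩, ⟨s 2, ?_⟩⟩ <;> fin_cases b <;>
    simp [s, straighten, crossProduct, invariantMap, wVar, g₁, g₂, g₃, t₁, t₂, t₃, w₁, w₂, w₃,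
      v₁, v₂, v₃, mul_comm, add_comm, add_left_comm, add_assoc]

theorem eqOn_straighten_scaleV (b : Fin 3) :
    Set.EqOn (straighten b) (scaleV b) {w₁, w₂, w₃, v₁, v₂, v₃} := by
  fin_cases b <;> simp [Set.EqOn, straighten, scaleV, wVar, w₁, w₂, w₃, v₁, v₂, v₃]

theorem scaleV_mem_range_invariantMap (b : Fin 3) {x : R}
    (hx : x ∈ Algebra.adjoin ℚ {w₁, w₂, w₃, g₁, g₂, g₃} ⊓
      Algebra.adjoin ℚ {w₁, w₂, w₃, v₁, v₂, v₃}) :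
    scaleV b x ∈ invariantMap.range :=
  AlgHom.eqOn_adjoin_iff.mpr (eqOn_straighten_scaleV b) hx.2 ▸ map_straighten_le b ⟨x, hx.1, rfl⟩

theorem w_dot_g_eq_w_dot_v : w₁ * g₁ + w₂ * g₂ + w₃ * g₃ = w₁ * v₁ + w₂ * v₂ + w₃ * v₃ := by
  simp only [g₁, g₂, g₃]
  ring

theorem adjoin_w_dot_v_le_inf :
    Algebra.adjoin ℚ {w₁, w₂, w₃, w₁ * v₁ + w₂ * v₂ + w₃ * v₃} ≤
      Algebra.adjoin ℚ {w₁, w₂, w₃, g₁, g₂, g₃} ⊓ Algebra.adjoin ℚ {w₁, w₂, w₃, v₁, v₂, v₃} := by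
  have hA : ({w₁, w₂, w₃, g₁, g₂, g₃} : Set R) ⊆ Algebra.adjoin ℚ {w₁, w₂, w₃, g₁, g₂, g₃} :=
    Algebra.subset_adjoin
  have hB : ({w₁, w₂, w₃, v₁, v₂, v₃} : Set R) ⊆ Algebra.adjoin ℚ {w₁, w₂, w₃, v₁, v₂, v₃} :=
    Algebra.subset_adjoin
  rw [Algebra.adjoin_le_iff]
  simp only [Set.insert_subset_iff, Set.singleton_subset_iff, SetLike.mem_coe, Algebra.mem_inf]
  refine ⟨⟨hA (by simp), hB (by simp)⟩, ⟨hA (by simp), hB (by simp)⟩,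
    ⟨hA (by simp), hB (by simp)⟩, ⟨?_, ?_⟩⟩
  · rw [← w_dot_g_eq_w_dot_v]
    refine add_mem (add_mem (mul_mem ?_ ?_) (mul_mem ?_ ?_)) (mul_mem ?_ ?_) <;> exact hA (by simp)
  · refine add_mem (add_mem (mul_mem ?_ ?_) (mul_mem ?_ ?_)) (mul_mem ?_ ?_) <;> exact hB (by simp)

/-- Translational invariants of a screw: the intersection of `ℚ[w₁, w₂, w₃, g₁, g₂, g₃]`
with `ℚ[w₁, w₂, w₃, v₁, v₂, v₃]` equals `ℚ[w₁, w₂, w₃, w·v]`. -/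
theorem translational_invariants :
    Algebra.adjoin ℚ {w₁, w₂, w₃, g₁, g₂, g₃} ⊓
        Algebra.adjoin ℚ {w₁, w₂, w₃, v₁, v₂, v₃} =
      Algebra.adjoin ℚ {w₁, w₂, w₃, w₁ * v₁ + w₂ * v₂ + w₃ * v₃} := by
  refine le_antisymm (fun x hx => ?_) adjoin_w_dot_v_le_inf
  rw [← range_invariantMap]
  exact mem_range_of_scale_mem_range invariantMap_injective (by decide) (by decide) (by decide)
    (scaleV_injective 2) (scaleV_scaleV_comm 0 2) (scaleV_invariantMap 2) (scaleV_invariantMap 0)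
    (scaleV_mem_range_invariantMap 2 hx) (scaleV_mem_range_invariantMap 0 hx)

end ScrewExample
end
end
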